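/- Let M and K be symmetric n×n real matrices, let A be the 2n×2n block matrix [[0, M],[−K, 0]], and for given n×n matrices M̃ and K̃ define the kick matrix B(c) = [[I, 0],[−c K̃, I]] and the move matrix C(c) = [[I, c M̃],[0, I]]. Then with the τ⁶-corrected matrices M̃ = M − (τ²/6)·M(KM) + (τ⁴/120)·M(KM)² − (τ⁶/5040)·M(KM)³ and K̃ = K + (τ²/12)·(KM)K + (τ⁴/120)·(KM)²K + (17τ⁶/20160)·(KM)³K, as τ → 0, B(τ/2)·C(τ)·B(τ/2) − exp(τA) = O(τ⁸). -/

import Mathlib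

/-!
Compare Taylor polynomials in `τ`. The powers of `A = [[0, M], [-K, 0]]` alternate between the block-diagonal matrices `(-MK)^j, (-KM)^j` and the
anti-diagonal ones, so the degree-`< 8` Taylor polynomial of `exp (τ A)` has the truncated cosine
and sine series of `MK` and `KM` as blocks. The kick-move-kick product is an explicit polynomial
in `τ`; the corrections in `M̃` and `K̃` are exactly what makes it agree with that Taylor polynomial
up to degree `7` (the move block agrees exactly), leaving `τ ^ 8` times a polynomial remainder.
-/

open Asymptotics Filter Matrix

attribute [local instance] Matrix.normedAddCommGroup

attribute [local instance] Matrix.normedSpace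

open scoped Nat

theorem exp_smul_sub_sum_range_isBigO {𝔸 : Type*} [NormedRing 𝔸] [NormedAlgebra ℝ 𝔸]
    [CompleteSpace 𝔸] (A : 𝔸) (N : ℕ) :
    (fun τ : ℝ => NormedSpace.exp (τ • A) - ∑ k ∈ Finset.range N, (k !⁻¹ : ℝ) • (τ • A) ^ k)
      =O[nhds 0] fun τ => τ ^ N := by
  have hexp : HasFPowerSeriesAt NormedSpace.exp (NormedSpace.expSeries ℝ 𝔸) 0 :=
    NormedSpace.hasFPowerSeriesAt_exp_zero_of_radius_pos
      (by simp [NormedSpace.expSeries_radius_eq_top])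
  have hsmul : Tendsto (fun τ : ℝ => τ • A) (nhds 0) (nhds 0) := by
    simpa using (tendsto_id (x := nhds (0 : ℝ))).smul_const A
  refine (((hexp.isBigO_sub_partialSum_pow N).comp_tendsto hsmul).congr_left fun τ => ?_).trans
    (IsBigO.of_bound (‖A‖ ^ N) (Eventually.of_forall fun τ => ?_))
  · simp [FormalMultilinearSeries.partialSum, NormedSpace.expSeries_apply_eq]
  · simp [norm_smul, mul_pow, mul_comm]

theorem Matrix.norm_le_linfty_opNorm {m n α : Type*} [Fintype m] [Fintype n]
    [NormedAddCommGroup α] (A : Matrix m n α) :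
    ‖A‖ ≤ @norm (Matrix m n α) Matrix.linftyOpNormedAddCommGroup.toNorm A := by
  refine (Matrix.norm_le_iff
    (@norm_nonneg (Matrix m n α) Matrix.linftyOpSeminormedAddCommGroup.toSeminormedAddGroup A)).2
    fun i j => ?_
  rw [@Matrix.linfty_opNorm_def]
  calc ‖A i j‖ ≤ ∑ k, ‖A i k‖ :=
        Finset.single_le_sum (f := fun k => ‖A i k‖) (fun _ _ => norm_nonneg _) (Finset.mem_univ j)
    _ ≤ _ := by
        simp only [← coe_nnnorm, ← NNReal.coe_sum, NNReal.coe_le_coe]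
        exact Finset.le_sup (f := fun i => ∑ k, ‖A i k‖₊) (Finset.mem_univ i)

/-- The ambient entrywise norm is not submultiplicative, so the Taylor estimate is made in the
operator norm `Matrix.linftyOpNormedRing`, which dominates it. -/
theorem Matrix.exp_smul_sub_sum_range_isBigO {ι : Type*} [Fintype ι] [DecidableEq ι]
    (A : Matrix ι ι ℝ) (N : ℕ) :
    (fun τ : ℝ => NormedSpace.exp (τ • A) - ∑ k ∈ Finset.range N, (k !⁻¹ : ℝ) • (τ • A) ^ k)
      =O[nhds 0] fun τ => τ ^ N := by
  have hcomplete : CompleteSpace (Matrix ι ι ℝ) := FiniteDimensional.complete ℝ _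
  have hop := @_root_.exp_smul_sub_sum_range_isBigO _ Matrix.linftyOpNormedRing
    Matrix.linftyOpNormedAlgebra hcomplete A N
  refine @IsBigO.trans _ _ _ _ _ _ Matrix.linftyOpSeminormedAddCommGroup _ _ _ _
    (@IsBigO.of_bound _ _ _ _ Matrix.linftyOpSeminormedAddCommGroup.toNorm _ _ _ 1
      (Eventually.of_forall fun τ => ?_)) hop
  rw [one_mul]
  exact Matrix.norm_le_linfty_opNorm _

theorem isBigO_pow_of_eq_pow_smul {E : Type*} [NormedAddCommGroup E] [NormedSpace ℝ E]
    {f R : ℝ → E} {N : ℕ} (hf : ∀ τ, f τ = τ ^ N • R τ) (hR : ContinuousAt R 0) :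
    f =O[nhds 0] fun τ => τ ^ N := by
  simpa [← funext hf] using
    (isBigO_refl (fun τ : ℝ => τ ^ N) (nhds 0)).smul (hR.tendsto.isBigO_one ℝ)

namespace Matrix

variable {ι R : Type*} [Fintype ι] [DecidableEq ι] [CommRing R]

theorem fromBlocks_kick_move_kick (c t : R) (K' M' : Matrix ι ι R) :
    fromBlocks 1 0 (-(c • K')) 1 * fromBlocks 1 (t • M') 0 1 * fromBlocks 1 0 (-(c • K')) 1 =
      fromBlocks (1 - (c * t) • (M' * K')) (t • M')
        (-(2 * c) • K' + (c ^ 2 * t) • (K' * M' * K')) (1 - (c * t) • (K' * M')) := by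
  simp only [fromBlocks_multiply, fromBlocks_inj, Matrix.mul_one, Matrix.one_mul,
    Matrix.mul_zero, add_zero, zero_add, Matrix.mul_neg, Matrix.neg_mul, Matrix.smul_mul,
    Matrix.mul_smul, smul_smul, Matrix.mul_assoc, Matrix.add_mul, true_and]
  exact ⟨by module, by module, by module⟩

theorem fromBlocks_zero_neg_zero_pow_two_mul (M K : Matrix ι ι R) (j : ℕ) :
    fromBlocks 0 M (-K) 0 ^ (2 * j) = fromBlocks ((-(M * K)) ^ j) 0 0 ((-(K * M)) ^ j) := by
  induction j with
  | zero => simp [fromBlocks_one]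
  | succ j ih =>
    rw [Nat.mul_succ, pow_add, ih, pow_two, fromBlocks_multiply, fromBlocks_multiply]
    simp [pow_succ]

theorem fromBlocks_zero_neg_zero_pow_two_mul_add_one (M K : Matrix ι ι R) (j : ℕ) :
    fromBlocks 0 M (-K) 0 ^ (2 * j + 1) =
      fromBlocks 0 ((-(M * K)) ^ j * M) (-((-(K * M)) ^ j * K)) 0 := by
  rw [pow_succ, fromBlocks_zero_neg_zero_pow_two_mul, fromBlocks_multiply]
  simp

theorem sum_range_two_mul_smul_fromBlocks_zero_neg_zero_pow (M K : Matrix ι ι R) (a : ℕ → R)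
    (N : ℕ) :
    ∑ k ∈ Finset.range (2 * N), a k • fromBlocks 0 M (-K) 0 ^ k =
      fromBlocks (∑ j ∈ Finset.range N, a (2 * j) • (-(M * K)) ^ j)
        (∑ j ∈ Finset.range N, a (2 * j + 1) • ((-(M * K)) ^ j * M))
        (-∑ j ∈ Finset.range N, a (2 * j + 1) • ((-(K * M)) ^ j * K))
        (∑ j ∈ Finset.range N, a (2 * j) • (-(K * M)) ^ j) := by
  induction N with
  | zero => simp
  | succ N ih =>
    rw [Nat.mul_succ, Finset.sum_range_succ, Finset.sum_range_succ, ih,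
      fromBlocks_zero_neg_zero_pow_two_mul, fromBlocks_zero_neg_zero_pow_two_mul_add_one]
    simp only [Finset.sum_range_succ, fromBlocks_smul, fromBlocks_add, neg_add, smul_neg,
      smul_zero, add_zero]

end Matrix

section KickMoveKick

variable {ι : Type*} [Fintype ι] [DecidableEq ι]

noncomputable def modifiedStiffness (M K : Matrix ι ι ℝ) (τ : ℝ) : Matrix ι ι ℝ :=
  K + (τ ^ 2 / 12) • ((K * M) * K) + (τ ^ 4 / 120) • ((K * M) * (K * M) * K)
    + (17 * τ ^ 6 / 20160) • ((K * M) * (K * M) * (K * M) * K)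

noncomputable def modifiedMass (M K : Matrix ι ι ℝ) (τ : ℝ) : Matrix ι ι ℝ :=
  M - (τ ^ 2 / 6) • (M * (K * M)) + (τ ^ 4 / 120) • (M * ((K * M) * (K * M)))
    - (τ ^ 6 / 5040) • (M * ((K * M) * (K * M) * (K * M)))

theorem kick_move_kick_sub_sum_range_eight (M K : Matrix ι ι ℝ) (τ : ℝ) :
    fromBlocks 1 0 (-((τ / 2) • modifiedStiffness M K τ)) 1 *
        fromBlocks 1 (τ • modifiedMass M K τ) 0 1 *
        fromBlocks 1 0 (-((τ / 2) • modifiedStiffness M K τ)) 1 -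
      ∑ k ∈ Finset.range 8, (k !⁻¹ : ℝ) • (τ • fromBlocks 0 M (-K) 0) ^ k =
    τ ^ 8 • fromBlocks
      ((1 / 40320 : ℝ) • (M * K) ^ 4 + (53 / 1209600 * τ ^ 2) • (M * K) ^ 5
        - (13 / 4838400 * τ ^ 4) • (M * K) ^ 6 + (17 / 203212800 * τ ^ 6) • (M * K) ^ 7)
      0
      (τ • K * ((1 / 12096 : ℝ) • (M * K) ^ 4 - (1 / 28800 * τ ^ 2) • (M * K) ^ 5
        - (37 / 301056000 * τ ^ 6) • (M * K) ^ 7 - (1 / 92897280 * τ ^ 8) • (M * K) ^ 8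
        + (17 / 21676032000 * τ ^ 10) • (M * K) ^ 9
        - (289 / 8193540096000 * τ ^ 12) • (M * K) ^ 10))
      ((1 / 40320 : ℝ) • (K * M) ^ 4 + (53 / 1209600 * τ ^ 2) • (K * M) ^ 5
        - (13 / 4838400 * τ ^ 4) • (K * M) ^ 6 + (17 / 203212800 * τ ^ 6) • (K * M) ^ 7) := by
  have hsum : ∑ k ∈ Finset.range 8, (k !⁻¹ : ℝ) • (τ • fromBlocks 0 M (-K) 0) ^ k =
      ∑ k ∈ Finset.range (2 * 4), ((k ! : ℝ)⁻¹ * τ ^ k) • fromBlocks 0 M (-K) 0 ^ k := by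
    simp only [smul_pow, smul_smul]
  rw [hsum, sum_range_two_mul_smul_fromBlocks_zero_neg_zero_pow, fromBlocks_kick_move_kick,
    fromBlocks_smul, sub_eq_add_neg, fromBlocks_neg, fromBlocks_add, fromBlocks_inj]
  simp only [Finset.sum_range_succ, Finset.sum_range_zero, modifiedStiffness, modifiedMass,
    Nat.factorial, pow_succ, pow_zero, Matrix.one_mul, Matrix.mul_add, Matrix.add_mul,
    Matrix.mul_sub, Matrix.sub_mul, Matrix.mul_neg, Matrix.neg_mul, neg_neg, Matrix.smul_mul,
    Matrix.mul_smul, smul_smul, Matrix.mul_assoc]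
  exact ⟨by module, by module, by module, by module⟩

end KickMoveKick

theorem kick_move_kick_quadratic_hamiltonian_order8_general
    (n : ℕ) (M K : Matrix (Fin n) (Fin n) ℝ) :
    (fun τ : ℝ =>
        Matrix.fromBlocks 1 0
              (-((τ / 2) • (K + (τ ^ 2 / 12) • ((K * M) * K)
                  + (τ ^ 4 / 120) • ((K * M) * (K * M) * K)
                  + (17 * τ ^ 6 / 20160) • ((K * M) * (K * M) * (K * M) * K)))) 1 *
            Matrix.fromBlocks 1
              (τ • (M - (τ ^ 2 / 6) • (M * (K * M))
                  + (τ ^ 4 / 120) • (M * ((K * M) * (K * M)))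
                  - (τ ^ 6 / 5040) • (M * ((K * M) * (K * M) * (K * M))))) 0 1 *
            Matrix.fromBlocks 1 0
              (-((τ / 2) • (K + (τ ^ 2 / 12) • ((K * M) * K)
                  + (τ ^ 4 / 120) • ((K * M) * (K * M) * K)
                  + (17 * τ ^ 6 / 20160) • ((K * M) * (K * M) * (K * M) * K)))) 1 -
          NormedSpace.exp (τ • Matrix.fromBlocks 0 M (-K) 0))
      =O[nhds (0 : ℝ)] fun τ : ℝ => τ ^ 8 := by
  have htaylor := isBigO_pow_of_eq_pow_smul (kick_move_kick_sub_sum_range_eight M K) (by fun_prop)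
  exact (htaylor.sub (Matrix.exp_smul_sub_sum_range_isBigO _ 8)).congr_left
    fun τ => sub_sub_sub_cancel_right _ _ _

theorem kick_move_kick_quadratic_hamiltonian_order8
    (n : ℕ) (M K : Matrix (Fin n) (Fin n) ℝ) (hM : M.IsSymm) (hK : K.IsSymm) :
    (fun τ : ℝ =>
        Matrix.fromBlocks 1 0
              (-((τ / 2) • (K + (τ ^ 2 / 12) • ((K * M) * K)
                  + (τ ^ 4 / 120) • ((K * M) * (K * M) * K)
                  + (17 * τ ^ 6 / 20160) • ((K * M) * (K * M) * (K * M) * K)))) 1 *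
            Matrix.fromBlocks 1
              (τ • (M - (τ ^ 2 / 6) • (M * (K * M))
                  + (τ ^ 4 / 120) • (M * ((K * M) * (K * M)))
                  - (τ ^ 6 / 5040) • (M * ((K * M) * (K * M) * (K * M))))) 0 1 *
            Matrix.fromBlocks 1 0
              (-((τ / 2) • (K + (τ ^ 2 / 12) • ((K * M) * K)
                  + (τ ^ 4 / 120) • ((K * M) * (K * M) * K)
                  + (17 * τ ^ 6 / 20160) • ((K * M) * (K * M) * (K * M) * K)))) 1 -
          NormedSpace.exp (τ • Matrix.fromBlocks 0 M (-K) 0))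
      =O[nhds (0 : ℝ)] fun τ : ℝ => τ ^ 8 :=
  kick_move_kick_quadratic_hamiltonian_order8_general n M K
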